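/- arXiv:1908.05975 — 2 statements merged into one kernel-verified Lean document; each statement's English description precedes it below -/
import Mathlib

section
/- Let g be the 6-dimensional real nilpotent Lie algebra with basis e_1,…,e_6 whose dual basis e^1,…,e^6 satisfies de^1 = de^2 = 0, de^3 = −e^1∧e^2, de^4 = e^1∧e^3, de^5 = e^1∧e^4 + e^2∧e^3, de^6 = e^2∧e^5 + e^3∧e^4, where d is the Chevalley–Eilenberg differential dα(x,y) = −α([x,y]). Then g admits a Ricci-flat metric which is not flat; explicitly, for any nonzero reals g_1, g_4, the symmetric bilinear form determined by ⟨e_1,e_3⟩ = g_1, ⟨e_2,e_2⟩ = −g_1, ⟨e_4,e_5⟩ = g_4, ⟨e_6,e_6⟩ = g_4²/g_1, with all other products of basis vectors equal to zero, is a nondegenerate Ricci-flat metric on g which is not flat. -/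
open scoped BigOperators

namespace ArrowBreakingPaper

variable {ι : Type*} {g : Type*} [LieRing g] [LieAlgebra ℝ g]

/-- `⁅e i, e j⁆` is a nonzero multiple of `e k` (the arrow `e i →^{e j} e k`). -/
def Arrow (e : ι → g) (i j k : ι) : Prop :=
  ∃ c : ℝ, c ≠ 0 ∧ ⁅e i, e j⁆ = c • e k

/-- A basis is *nice* if each bracket of two basis vectors is a multiple of a single basis
vector, and for all `i`, `k` there is at most one `j` such that the `e k`-coefficient of
`⁅e i, e j⁆` is nonzero. -/
def IsNiceBasis (e : Module.Basis ι ℝ g) : Prop :=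
  (∀ i j : ι, ∃ (k : ι) (c : ℝ), ⁅e i, e j⁆ = c • e k) ∧
  (∀ i k j j' : ι, e.repr ⁅e i, e j⁆ k ≠ 0 → e.repr ⁅e i, e j'⁆ k ≠ 0 → j = j')

/-- An *arrow-breaking involution* of the (nice) basis `e`. -/
def IsArrowBreaking (e : ι → g) (σ : Equiv.Perm ι) : Prop :=
  (∀ i, σ (σ i) = i) ∧
  (∀ i j k, Arrow e i j k → ∀ l, ¬ Arrow e l (σ j) (σ k)) ∧
  (∀ i j k, Arrow e i j k → ∀ m, ¬ Arrow e (σ i) (σ j) m)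

/-- A `σ`-diagonal metric: `⟨e i, e (σ j)⟩ = gᵢ δᵢⱼ` with all `gᵢ ≠ 0` and `g_{σ i} = gᵢ`. -/
def IsSigmaDiagonal [DecidableEq ι] (e : Module.Basis ι ℝ g) (σ : Equiv.Perm ι)
    (B : LinearMap.BilinForm ℝ g) : Prop :=
  ∃ gv : ι → ℝ, (∀ i, gv i ≠ 0) ∧ (∀ i, gv (σ i) = gv i) ∧
    ∀ i j, B (e i) (e (σ j)) = if i = j then gv i else 0

/-- Symmetry of a bilinear form. -/
def IsSymm (B : LinearMap.BilinForm ℝ g) : Prop := ∀ x y : g, B x y = B y x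

/-- Nondegeneracy of a bilinear form. -/
def Nondeg (B : LinearMap.BilinForm ℝ g) : Prop :=
  ∀ v : g, (∀ w : g, B v w = 0) → v = 0

/-- The Gram matrix of a bilinear form in a basis. -/
noncomputable def gram [Fintype ι] (e : Module.Basis ι ℝ g) (B : LinearMap.BilinForm ℝ g) :
    Matrix ι ι ℝ := Matrix.of fun i j => B (e i) (e j)

/-- The Ricci curvature `ric(v,w) = ½⟨dv♭, dw♭⟩ − ½⟨ad v, ad w⟩` written in the
coordinates of a basis `e`, where `dα(x,y) = −α(⁅x,y⁆)` and the scalar products on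
`Λ²g*` and `g*⊗g` are induced by the dual metric (inverse Gram matrix). -/
noncomputable def ricci [Fintype ι] [DecidableEq ι] (e : Module.Basis ι ℝ g)
    (B : LinearMap.BilinForm ℝ g) (v w : g) : ℝ :=
  (1/2) * ((1/2) * ∑ i, ∑ j, ∑ k, ∑ l,
      (gram e B)⁻¹ i k * (gram e B)⁻¹ j l * (-(B v ⁅e i, e j⁆)) * (-(B w ⁅e k, e l⁆)))
  - (1/2) * ∑ i, ∑ j, (gram e B)⁻¹ i j * B ⁅v, e i⁆ ⁅w, e j⁆

/-- Ricci-flatness of a metric on a Lie algebra. -/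
def IsRicciFlat (B : LinearMap.BilinForm ℝ g) : Prop :=
  ∀ (m : ℕ) (e : Module.Basis (Fin m) ℝ g) (v w : g), ricci e B v w = 0

/-- The Koszul formula characterizing the Levi-Civita connection. -/
def IsLeviCivita (B : LinearMap.BilinForm ℝ g) (nab : g → g → g) : Prop :=
  ∀ u v w : g, 2 * B (nab u v) w = B ⁅u, v⁆ w - B ⁅v, w⁆ u + B ⁅w, u⁆ v

/-- The curvature `R(u,v)w = ∇_{⁅u,v⁆} w − ∇_u ∇_v w + ∇_v ∇_u w`. -/
def curv (nab : g → g → g) (u v w : g) : g :=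
  nab ⁅u, v⁆ w - nab u (nab v w) + nab v (nab u w)

/-- Flatness of a metric on a Lie algebra. -/
def IsFlat (B : LinearMap.BilinForm ℝ g) : Prop :=
  ∃ nab : g → g → g, IsLeviCivita B nab ∧ ∀ u v w : g, curv nab u v w = 0


/-!
In any basis, `ric(v, w)` is a contraction of bilinear forms with the inverse Gram matrix. Under
a change of basis all these matrices transform by congruence, so `ric(v, w)` does not depend on
the basis. Ricci-flatness can therefore be checked in the basis `e`, where the Gram matrix and its
inverse are explicit and `ric(v, w) = 0` becomes a polynomial identity in the coordinates of `v`
and `w`.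

For non-flatness, the Koszul formula gives `∇_{e 1} e 0 = ∇_{e 1} e 1 = 0`,
`∇_{e 0} e 0 = e 1` and `∇_{e 2} e 0 = ½ e 3`, hence `R(e 0, e 1) e 0 = ½ e 3 ≠ 0`.
-/

open Matrix

section Congruence
variable {n : Type*} [Fintype n] [DecidableEq n] {P : Matrix n n ℝ} (G F H : Matrix n n ℝ)

lemma inv_transpose_mul_mul (P : Matrix n n ℝ) :
    (Pᵀ * G * P)⁻¹ = P⁻¹ * G⁻¹ * Pᵀ⁻¹ := by
  rw [Matrix.mul_inv_rev, Matrix.mul_inv_rev, Matrix.mul_assoc]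

lemma trace_nonsing_inv_mul_mul (hP : IsUnit P.det) (X : Matrix n n ℝ) :
    trace (P⁻¹ * X * P) = trace X := by
  rw [trace_mul_cycle, mul_nonsing_inv P hP, Matrix.one_mul]

lemma trace_inv_mul_transpose_congruence (hP : IsUnit P.det) :
    trace ((Pᵀ * G * P)⁻¹ * (Pᵀ * F * P)ᵀ) = trace (G⁻¹ * Fᵀ) := by
  have hPT : IsUnit Pᵀ.det := by rwa [det_transpose]
  rw [inv_transpose_mul_mul, ← trace_nonsing_inv_mul_mul hP (G⁻¹ * Fᵀ)]
  simp only [transpose_mul, transpose_transpose, Matrix.mul_assoc,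
    nonsing_inv_mul_cancel_left _ _ hPT]

lemma trace_inv_mul_mul_inv_transpose_mul_transpose_congruence (hP : IsUnit P.det) :
    trace ((Pᵀ * G * P)⁻¹ * (Pᵀ * H * P) * (Pᵀ * G * P)⁻¹ᵀ * (Pᵀ * F * P)ᵀ) =
      trace (G⁻¹ * H * G⁻¹ᵀ * Fᵀ) := by
  have hPT : IsUnit Pᵀ.det := by rwa [det_transpose]
  rw [inv_transpose_mul_mul, ← trace_nonsing_inv_mul_mul hP (G⁻¹ * H * G⁻¹ᵀ * Fᵀ)]
  simp only [transpose_mul, transpose_transpose, Matrix.mul_assoc, transpose_nonsing_inv,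
    nonsing_inv_mul_cancel_left _ _ hPT, mul_nonsing_inv_cancel_left _ _ hP]

end Congruence

open LinearMap.BilinForm (toMatrix toMatrix_apply)

section Metric
variable [Fintype ι] [DecidableEq ι] {B : LinearMap.BilinForm ℝ g}

/-- `d(v♭) : (x, y) ↦ -⟨v, ⁅x, y⁆⟩`. -/
def dFlat (B : LinearMap.BilinForm ℝ g) (v : g) : LinearMap.BilinForm ℝ g :=
  -(LieAlgebra.ad ℝ g : g →ₗ[ℝ] Module.End ℝ g).compr₂ (B v)

def adPairing (B : LinearMap.BilinForm ℝ g) (v w : g) : LinearMap.BilinForm ℝ g :=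
  B.compl₁₂ (LieAlgebra.ad ℝ g v) (LieAlgebra.ad ℝ g w)

lemma gram_eq_toMatrix (e : Module.Basis ι ℝ g) (B : LinearMap.BilinForm ℝ g) :
    gram e B = toMatrix e B := by
  ext i j
  rw [toMatrix_apply, gram, of_apply]

lemma apply_eq_sum_of_toMatrix_eq (e : Module.Basis ι ℝ g) {M : Matrix ι ι ℝ}
    (hB : toMatrix e B = M) (x y : g) :
    B x y = ∑ i, ∑ j, e.repr x i * M i j * e.repr y j := by
  rw [← Matrix.toBilin_toMatrix e B, hB, Matrix.toBilin_apply]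

lemma ricci_eq_trace (e : Module.Basis ι ℝ g) (B : LinearMap.BilinForm ℝ g) (v w : g) :
    ricci e B v w =
      1 / 2 * (1 / 2 * trace ((toMatrix e B)⁻¹ * toMatrix e (dFlat B w) *
        (toMatrix e B)⁻¹ᵀ * (toMatrix e (dFlat B v))ᵀ)) -
      1 / 2 * trace ((toMatrix e B)⁻¹ * (toMatrix e (adPairing B v w))ᵀ) := by
  simp only [ricci, gram_eq_toMatrix, trace, diag, mul_apply, transpose_apply, toMatrix_apply,
    dFlat, adPairing, LinearMap.neg_apply, LinearMap.compr₂_apply, LinearMap.compl₁₂_apply,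
    LieHom.coe_toLinearMap, LieAlgebra.ad_apply, Finset.sum_mul]
  congr 3
  refine Finset.sum_congr rfl fun i _ => Finset.sum_congr rfl fun j _ => ?_
  rw [Finset.sum_comm]
  refine Finset.sum_congr rfl fun k _ => Finset.sum_congr rfl fun l _ => ?_
  ring

lemma ricci_basis_change (e e' : Module.Basis ι ℝ g) (B : LinearMap.BilinForm ℝ g) (v w : g) :
    ricci e' B v w = ricci e B v w := by
  have := e.invertibleToMatrix e'
  have hP := isUnit_det_of_invertible (e.toMatrix e')
  simp only [ricci_eq_trace, ← LinearMap.BilinForm.toMatrix_mul_basis_toMatrix e e',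
    trace_inv_mul_transpose_congruence _ _ hP,
    trace_inv_mul_mul_inv_transpose_mul_transpose_congruence _ _ _ hP]

lemma isRicciFlat_of_ricci_eq_zero {n : ℕ} (e : Module.Basis (Fin n) ℝ g)
    (h : ∀ v w, ricci e B v w = 0) : IsRicciFlat B := by
  intro m e' v w
  obtain rfl : m = n := by
    simpa using (Module.finrank_eq_card_basis e').symm.trans (Module.finrank_eq_card_basis e)
  rw [ricci_basis_change e e', h]

lemma isSymm_toBilin (e : Module.Basis ι ℝ g) {M : Matrix ι ι ℝ} (hM : M.IsSymm) :
    IsSymm (Matrix.toBilin e M) :=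
  LinearMap.BilinForm.isSymm_def.1 ((Matrix.isSymm_toBilin_iff_isSymm e).2 hM)

lemma nondeg_of_toMatrix_mul_eq_one (e : Module.Basis ι ℝ g) {N : Matrix ι ι ℝ}
    (h : toMatrix e B * N = 1) : Nondeg B :=
  (LinearMap.BilinForm.nondegenerate_of_det_ne_zero B e (det_ne_zero_of_right_inverse h)).1

end Metric

section LeviCivita
variable {B : LinearMap.BilinForm ℝ g}

lemma Nondeg.eq_of_forall_apply_basis (hB : Nondeg B) (e : Module.Basis ι ℝ g) {x y : g}
    (h : ∀ k, B x (e k) = B y (e k)) : x = y :=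
  sub_eq_zero.1 <| hB _ fun w =>
    LinearMap.congr_fun (e.ext (f₂ := 0) fun k => by simp [h k]) w

lemma IsLeviCivita.apply_eq_of_koszul {nab : g → g → g} (hnab : IsLeviCivita B nab)
    (hB : Nondeg B) (e : Module.Basis ι ℝ g) {u v x : g}
    (h : ∀ k, 2 * B x (e k) = B ⁅u, v⁆ (e k) - B ⁅v, e k⁆ u + B ⁅e k, u⁆ v) :
    nab u v = x :=
  hB.eq_of_forall_apply_basis e fun k => by linarith [hnab u v (e k), h k]

end LeviCivita

section Algebra64321
variable {e : Module.Basis (Fin 6) ℝ g} {B : LinearMap.BilinForm ℝ g} {g₁ g₄ : ℝ}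

def bracketCoord (x y : Fin 6 → ℝ) : Fin 6 → ℝ :=
  ![0, 0, x 0 * y 1 - y 0 * x 1, -(x 0 * y 2 - y 0 * x 2),
    -((x 0 * y 3 - y 0 * x 3) + (x 1 * y 2 - y 1 * x 2)),
    -((x 1 * y 4 - y 1 * x 4) + (x 2 * y 3 - y 2 * x 3))]

noncomputable def metricGram (g₁ g₄ : ℝ) : Matrix (Fin 6) (Fin 6) ℝ :=
  Matrix.of fun i j =>
    if (i = 0 ∧ j = 2) ∨ (i = 2 ∧ j = 0) then g₁
    else if i = 1 ∧ j = 1 then -g₁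
    else if (i = 3 ∧ j = 4) ∨ (i = 4 ∧ j = 3) then g₄
    else if i = 5 ∧ j = 5 then g₄ ^ 2 / g₁
    else 0

noncomputable def metricGramInv (g₁ g₄ : ℝ) : Matrix (Fin 6) (Fin 6) ℝ :=
  Matrix.of fun i j =>
    if (i = 0 ∧ j = 2) ∨ (i = 2 ∧ j = 0) then g₁⁻¹
    else if i = 1 ∧ j = 1 then -g₁⁻¹
    else if (i = 3 ∧ j = 4) ∨ (i = 4 ∧ j = 3) then g₄⁻¹
    else if i = 5 ∧ j = 5 then g₁ / g₄ ^ 2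
    else 0

lemma metricGram_isSymm : (metricGram g₁ g₄).IsSymm := by
  ext i j
  fin_cases i <;> fin_cases j <;> simp [metricGram]

lemma metricGram_mul_metricGramInv (hg₁ : g₁ ≠ 0) (hg₄ : g₄ ≠ 0) :
    metricGram g₁ g₄ * metricGramInv g₁ g₄ = 1 := by
  ext i j
  fin_cases i <;> fin_cases j <;> simp [mul_apply, metricGram, metricGramInv, hg₁, hg₄]

lemma repr_lie_eq_bracketCoord
    (hd1 : ∀ x y : g, e.repr ⁅x, y⁆ 0 = 0)
    (hd2 : ∀ x y : g, e.repr ⁅x, y⁆ 1 = 0)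
    (hd3 : ∀ x y : g, e.repr ⁅x, y⁆ 2 = e.repr x 0 * e.repr y 1 - e.repr y 0 * e.repr x 1)
    (hd4 : ∀ x y : g, e.repr ⁅x, y⁆ 3 = -(e.repr x 0 * e.repr y 2 - e.repr y 0 * e.repr x 2))
    (hd5 : ∀ x y : g, e.repr ⁅x, y⁆ 4 =
      -((e.repr x 0 * e.repr y 3 - e.repr y 0 * e.repr x 3)
        + (e.repr x 1 * e.repr y 2 - e.repr y 1 * e.repr x 2)))
    (hd6 : ∀ x y : g, e.repr ⁅x, y⁆ 5 =
      -((e.repr x 1 * e.repr y 4 - e.repr y 1 * e.repr x 4)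
        + (e.repr x 2 * e.repr y 3 - e.repr y 2 * e.repr x 3)))
    (x y : g) : ⇑(e.repr ⁅x, y⁆) = bracketCoord (e.repr x) (e.repr y) := by
  funext k
  fin_cases k
  exacts [hd1 x y, hd2 x y, hd3 x y, hd4 x y, hd5 x y, hd6 x y]

lemma lie_zero_one
    (hbr : ∀ x y : g, ⇑(e.repr ⁅x, y⁆) = bracketCoord (e.repr x) (e.repr y)) :
    ⁅e 0, e 1⁆ = e 2 := by
  refine e.repr.injective (Finsupp.ext fun k => ?_)
  rw [hbr]
  fin_cases k <;> simp [bracketCoord]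

lemma ricci_eq_zero_of_toMatrix_eq_metricGram
    (hbr : ∀ x y : g, ⇑(e.repr ⁅x, y⁆) = bracketCoord (e.repr x) (e.repr y))
    (hg₁ : g₁ ≠ 0) (hg₄ : g₄ ≠ 0)
    (hB : toMatrix e B = metricGram g₁ g₄) (v w : g) : ricci e B v w = 0 := by
  have hinv : (gram e B)⁻¹ = metricGramInv g₁ g₄ := by
    rw [gram_eq_toMatrix, hB, inv_eq_right_inv (metricGram_mul_metricGramInv hg₁ hg₄)]
  rw [ricci, hinv]
  simp only [apply_eq_sum_of_toMatrix_eq e hB, hbr, e.repr_self]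
  simp only [one_div, metricGramInv, Fin.isValue, of_apply, mul_ite, ite_mul, neg_mul, zero_mul,
    mul_neg, mul_zero, metricGram, bracketCoord, Finsupp.single_apply, mul_one, neg_sub,
    neg_add_rev, Fin.sum_univ_six, Fin.reduceEq, and_false, and_true, false_or, cons_val_zero,
    zero_ne_one, ↓reduceIte, or_self, ite_self, one_ne_zero, cons_val_one, neg_zero, add_zero,
    or_false, cons_val, zero_add, sub_self, sub_zero, zero_sub, neg_neg, one_mul]
  field_simp
  ring

lemma not_isFlat_of_toMatrix_eq_metricGram
    (hbr : ∀ x y : g, ⇑(e.repr ⁅x, y⁆) = bracketCoord (e.repr x) (e.repr y))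
    (hg₁ : g₁ ≠ 0) (hg₄ : g₄ ≠ 0)
    (hB : toMatrix e B = metricGram g₁ g₄) : ¬ IsFlat B := by
  rintro ⟨nab, hnab, hR⟩
  have hnd := nondeg_of_toMatrix_mul_eq_one e (hB ▸ metricGram_mul_metricGramInv hg₁ hg₄)
  obtain ⟨h10, h00, h11, h20⟩ : nab (e 1) (e 0) = 0 ∧ nab (e 0) (e 0) = e 1 ∧
      nab (e 1) (e 1) = 0 ∧ nab (e 2) (e 0) = (1 / 2 : ℝ) • e 3 := by
    refine ⟨?_, ?_, ?_, ?_⟩ <;> refine hnab.apply_eq_of_koszul hnd e fun k => ?_ <;>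
      fin_cases k <;>
      simp [apply_eq_sum_of_toMatrix_eq e hB, hbr, metricGram, bracketCoord,
        Finsupp.single_apply, two_mul]
  have h0z : nab (e 0) 0 = 0 := hnab.apply_eq_of_koszul hnd e fun k => by simp
  have hR001 := hR (e 0) (e 1) (e 0)
  rw [curv, lie_zero_one hbr, h10, h00, h20, h0z, h11] at hR001
  simp [e.ne_zero] at hR001

end Algebra64321

/-- The Lie algebra `64321:5`, with structure equations
`de¹ = de² = 0`, `de³ = −e¹∧e²`, `de⁴ = e¹∧e³`, `de⁵ = e¹∧e⁴ + e²∧e³`,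
`de⁶ = e²∧e⁵ + e³∧e⁴` (where `dα(x,y) = −α(⁅x,y⁆)`), admits a Ricci-flat nonflat metric;
explicitly, for nonzero `g₁, g₄`, the symmetric bilinear form with `⟨e₁,e₃⟩ = g₁`,
`⟨e₂,e₂⟩ = −g₁`, `⟨e₄,e₅⟩ = g₄`, `⟨e₆,e₆⟩ = g₄²/g₁` and all other products zero is a
nondegenerate Ricci-flat metric which is not flat. -/
theorem statement17 {g : Type*} [LieRing g] [LieAlgebra ℝ g]
    (e : Module.Basis (Fin 6) ℝ g)
    -- `de¹ = 0` and `de² = 0`: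
    (hd1 : ∀ x y : g, e.repr ⁅x, y⁆ 0 = 0)
    (hd2 : ∀ x y : g, e.repr ⁅x, y⁆ 1 = 0)
    -- `de³ = −e¹∧e²`, i.e. `−e³(⁅x,y⁆) = −(e¹(x)e²(y) − e¹(y)e²(x))`:
    (hd3 : ∀ x y : g, e.repr ⁅x, y⁆ 2 =
      e.repr x 0 * e.repr y 1 - e.repr y 0 * e.repr x 1)
    -- `de⁴ = e¹∧e³`:
    (hd4 : ∀ x y : g, e.repr ⁅x, y⁆ 3 =
      -(e.repr x 0 * e.repr y 2 - e.repr y 0 * e.repr x 2))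
    -- `de⁵ = e¹∧e⁴ + e²∧e³`:
    (hd5 : ∀ x y : g, e.repr ⁅x, y⁆ 4 =
      -((e.repr x 0 * e.repr y 3 - e.repr y 0 * e.repr x 3)
        + (e.repr x 1 * e.repr y 2 - e.repr y 1 * e.repr x 2)))
    -- `de⁶ = e²∧e⁵ + e³∧e⁴`:
    (hd6 : ∀ x y : g, e.repr ⁅x, y⁆ 5 =
      -((e.repr x 1 * e.repr y 4 - e.repr y 1 * e.repr x 4)
        + (e.repr x 2 * e.repr y 3 - e.repr y 2 * e.repr x 3))) :
    (∃ B : LinearMap.BilinForm ℝ g, IsSymm B ∧ Nondeg B ∧ IsRicciFlat B ∧ ¬ IsFlat B) ∧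
    ∀ (g₁ g₄ : ℝ), g₁ ≠ 0 → g₄ ≠ 0 →
      ∀ B : LinearMap.BilinForm ℝ g,
        (∀ i j : Fin 6, B (e i) (e j) =
          if (i = 0 ∧ j = 2) ∨ (i = 2 ∧ j = 0) then g₁
          else if i = 1 ∧ j = 1 then -g₁
          else if (i = 3 ∧ j = 4) ∨ (i = 4 ∧ j = 3) then g₄
          else if i = 5 ∧ j = 5 then g₄ ^ 2 / g₁
          else 0) →
        Nondeg B ∧ IsRicciFlat B ∧ ¬ IsFlat B := by
  have hbr := repr_lie_eq_bracketCoord hd1 hd2 hd3 hd4 hd5 hd6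
  have key : ∀ g₁ g₄ : ℝ, g₁ ≠ 0 → g₄ ≠ 0 → ∀ B : LinearMap.BilinForm ℝ g,
      toMatrix e B = metricGram g₁ g₄ → Nondeg B ∧ IsRicciFlat B ∧ ¬ IsFlat B :=
    fun g₁ g₄ hg₁ hg₄ B hB =>
      ⟨nondeg_of_toMatrix_mul_eq_one e (hB ▸ metricGram_mul_metricGramInv hg₁ hg₄),
        isRicciFlat_of_ricci_eq_zero e (ricci_eq_zero_of_toMatrix_eq_metricGram hbr hg₁ hg₄ hB),
        not_isFlat_of_toMatrix_eq_metricGram hbr hg₁ hg₄ hB⟩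
  refine ⟨⟨Matrix.toBilin e (metricGram 1 1), isSymm_toBilin e metricGram_isSymm,
    key 1 1 one_ne_zero one_ne_zero _ (LinearMap.BilinForm.toMatrix_toBilin e _)⟩,
    fun g₁ g₄ hg₁ hg₄ B hB => key g₁ g₄ hg₁ hg₄ B ?_⟩
  ext i j
  rw [toMatrix_apply, hB i j]
  rfl

end ArrowBreakingPaper
end

section
/- For every integer n ≥ 2, the real Heisenberg Lie algebra h_{2n+1}, with basis {e_1,…,e_{2n}, y} and only nonzero brackets [e_{2i}, e_{2i−1}] = y for i = 1,…,n, admits a Ricci-flat metric which is not flat. -/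
open scoped BigOperators

namespace ArrowBreakingPaper

variable {ι : Type*} {g : Type*} [LieRing g] [LieAlgebra ℝ g]

/-!
All brackets are multiples of the central vector `y = e (2n)`. For a metric `B`, write
`⁅x, z⁆ = B (A x) z • y`; then `A` is `B`-skew and, for any basis, the coordinate formula gives
`ric(v, w) = -¼ B(v,y) B(w,y) tr A² - ½ B(y,y) B(Av, Aw)`, while Koszul's formula gives
`∇_u v = ½ (B(Au,v) y - B(y,u) Av - B(y,v) Au)`.

Take `B(e i, e j) = δ_{σ i, j}` for the involution `σ` exchanging `e 0 ↔ y` and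
`e (2k-1) ↔ e (2k)` for `1 ≤ k < n`, and fixing `e (2n-1)`. Then `y` is null, and `σ` maps no
bracket pair `{2m, 2m+1}` to a bracket pair, which makes `tr A² = 0`: the metric is Ricci-flat.
On the other hand `b = e (2n-2)` is orthogonal to `y` while `A b = -e (2n-1)` is not null, and
`R(a, b) b = -¼ B(y,a) B(Ab, Ab) y ≠ 0` whenever `B(y, a) ≠ 0`.
-/

section Contraction

variable [Fintype ι] [DecidableEq ι] (f : Module.Basis ι ℝ g)
  {B : LinearMap.BilinForm ℝ g}

lemma gram_det_ne_zero (hnd : Nondeg B) : (gram f B).det ≠ 0 := by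
  have h := (LinearMap.separatingLeft_iff_det_ne_zero f).mp hnd
  convert h using 2
  ext i j
  simp [gram, LinearMap.toMatrix₂_apply]

lemma sum_gram_inv_mul_apply (hnd : Nondeg B) (u : g) (l : ι) :
    ∑ j, (gram f B)⁻¹ l j * B (f j) u = f.repr u l := by
  have hG : (fun j => B (f j) u) = (gram f B).mulVec (f.repr u) := by
    ext j
    simp only [Matrix.mulVec, dotProduct, gram, Matrix.of_apply]
    conv_lhs => rw [← f.sum_repr u]
    simp only [map_sum, map_smul, smul_eq_mul, mul_comm]
  have hinv : (gram f B)⁻¹ * gram f B = 1 :=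
    Matrix.nonsing_inv_mul _ (isUnit_iff_ne_zero.mpr (gram_det_ne_zero f hnd))
  change ((gram f B)⁻¹.mulVec fun j => B (f j) u) l = _
  rw [hG, Matrix.mulVec_mulVec, hinv, Matrix.one_mulVec]

lemma sum_gram_inv_mul_mul (hnd : Nondeg B) (u u' : g) :
    ∑ j, ∑ l, (gram f B)⁻¹ j l * B u (f j) * B (f l) u' = B u u' := by
  conv_rhs => rw [← f.sum_repr u']
  simp only [map_sum, map_smul, smul_eq_mul, ← sum_gram_inv_mul_apply f hnd u']
  refine Finset.sum_congr rfl fun j _ => ?_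
  rw [Finset.sum_mul]
  exact Finset.sum_congr rfl fun l _ => by ring

lemma sum_gram_inv_mul_eq_trace (hsym : IsSymm B) (hnd : Nondeg B) (T : g →ₗ[ℝ] g) :
    ∑ i, ∑ k, (gram f B)⁻¹ i k * B (T (f i)) (f k) = LinearMap.trace ℝ g T := by
  rw [LinearMap.trace_eq_matrix_trace ℝ f, Matrix.trace]
  refine Finset.sum_congr rfl fun i _ => ?_
  simp only [hsym (T (f i)), sum_gram_inv_mul_apply f hnd, Matrix.diag_apply,
    LinearMap.toMatrix_apply]

end Contraction

section DerivedLine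

variable {B : LinearMap.BilinForm ℝ g} {A : g →ₗ[ℝ] g} {y : g}

lemma apply_skew_of_lie_eq (hy : y ≠ 0) (hA : ∀ x z, ⁅x, z⁆ = B (A x) z • y) (x z : g) :
    B (A x) z = -B (A z) x := by
  apply smul_left_injective ℝ hy
  simp only [← hA, neg_smul, lie_skew]

lemma ricci_eq_of_lie_eq [Fintype ι] [DecidableEq ι] (f : Module.Basis ι ℝ g)
    (hsym : IsSymm B) (hnd : Nondeg B) (hy : y ≠ 0) (hA : ∀ x z, ⁅x, z⁆ = B (A x) z • y)
    (v w : g) :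
    ricci f B v w = -(1 / 4) * (B v y * B w y) * LinearMap.trace ℝ g (A ∘ₗ A)
      - (1 / 2) * B y y * B (A v) (A w) := by
  have hAA : ∀ x z, B (A x) (A z) = -B ((A ∘ₗ A) x) z := fun x z => by
    rw [hsym, apply_skew_of_lie_eq hy hA, LinearMap.comp_apply, hsym]
  have hd : ∑ i, ∑ j, ∑ k, ∑ l,
      (gram f B)⁻¹ i k * (gram f B)⁻¹ j l * (-(B v ⁅f i, f j⁆)) * (-(B w ⁅f k, f l⁆))
      = -(B v y * B w y) * LinearMap.trace ℝ g (A ∘ₗ A) := by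
    calc _ = ∑ i, ∑ k, (B v y * B w y * (gram f B)⁻¹ i k) *
          ∑ j, ∑ l, (gram f B)⁻¹ j l * B (A (f i)) (f j) * B (f l) (A (f k)) := by
          refine Finset.sum_congr rfl fun i _ => ?_
          rw [Finset.sum_comm]
          refine Finset.sum_congr rfl fun k _ => ?_
          simp only [hA, map_smul, smul_eq_mul, Finset.mul_sum, hsym (f _) (A (f k))]
          exact Finset.sum_congr rfl fun j _ => Finset.sum_congr rfl fun l _ => by ring
      _ = -(B v y * B w y) * ∑ i, ∑ k, (gram f B)⁻¹ i k * B ((A ∘ₗ A) (f i)) (f k) := by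
          conv_rhs => simp only [Finset.mul_sum]
          refine Finset.sum_congr rfl fun i _ => Finset.sum_congr rfl fun k _ => ?_
          rw [sum_gram_inv_mul_mul f hnd, hAA]
          ring
      _ = _ := by rw [sum_gram_inv_mul_eq_trace f hsym hnd]
  have had : ∑ i, ∑ j, (gram f B)⁻¹ i j * B ⁅v, f i⁆ ⁅w, f j⁆ = B y y * B (A v) (A w) := by
    rw [← sum_gram_inv_mul_mul f hnd (A v) (A w), Finset.mul_sum]
    refine Finset.sum_congr rfl fun i _ => ?_
    rw [Finset.mul_sum]
    refine Finset.sum_congr rfl fun j _ => ?_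
    simp only [hA v, hA w, map_smul, LinearMap.smul_apply, smul_eq_mul, hsym (f j) (A w)]
    ring
  rw [ricci, hd, had]
  ring

lemma IsLeviCivita.eq_of_lie_eq {nab : g → g → g} (hnab : IsLeviCivita B nab) (hnd : Nondeg B)
    (hy : y ≠ 0) (hA : ∀ x z, ⁅x, z⁆ = B (A x) z • y) (u v : g) :
    nab u v = (1 / 2 : ℝ) • (B (A u) v • y - B y u • A v - B y v • A u) := by
  rw [← sub_eq_zero]
  refine hnd _ fun w => ?_
  have h := hnab u v w
  simp only [hA, map_smul, map_sub, LinearMap.sub_apply, LinearMap.smul_apply, smul_eq_mul,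
    apply_skew_of_lie_eq hy hA w u] at h ⊢
  linarith

lemma curv_eq_of_lie_eq {nab : g → g → g} (hnab : IsLeviCivita B nab) (hsym : IsSymm B)
    (hnd : Nondeg B) (hy : y ≠ 0) (hA : ∀ x z, ⁅x, z⁆ = B (A x) z • y)
    (hcent : ∀ z : g, ⁅y, z⁆ = 0) (hyy : B y y = 0) (a : g) {b : g} (hb : B y b = 0) :
    curv nab a b b = -(1 / 4 * B y a * B (A b) (A b)) • y := by
  have hAy : A y = 0 := hnd _ fun z => by
    simpa [hy, hcent] using (hA y z).symm
  have hAby : B (A b) y = 0 := by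
    rw [apply_skew_of_lie_eq hy hA, hAy, map_zero, LinearMap.zero_apply, neg_zero]
  have hAbb : B (A b) b = 0 := by
    have := apply_skew_of_lie_eq hy hA b b
    linarith
  have hN := funext₂ (hnab.eq_of_lie_eq hnd hy hA)
  simp only [curv, hN, hA a b, map_smul, map_sub, smul_eq_mul, hAy, hyy,
    hb, hsym y (A b), hAby, hAbb, map_zero, LinearMap.zero_apply, mul_zero, zero_smul, smul_zero,
    sub_zero, zero_sub]
  module

lemma not_isFlat_of_lie_eq (hsym : IsSymm B) (hnd : Nondeg B) (hy : y ≠ 0)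
    (hA : ∀ x z, ⁅x, z⁆ = B (A x) z • y) (hcent : ∀ z : g, ⁅y, z⁆ = 0) (hyy : B y y = 0) {b : g}
    (hb : B y b = 0) (hAb : B (A b) (A b) ≠ 0) : ¬ IsFlat B := by
  rintro ⟨nab, hnab, hflat⟩
  obtain ⟨a, ha⟩ : ∃ a, B y a ≠ 0 := by
    by_contra! h
    exact hy (hnd y h)
  have h := curv_eq_of_lie_eq hnab hsym hnd hy hA hcent hyy a hb
  rw [hflat, eq_comm, smul_eq_zero] at h
  rcases h with h | h
  · simp [ha, hAb] at h
  · exact hy h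

end DerivedLine

section InvolutionForm

variable [Fintype ι] (e : Module.Basis ι ℝ g) {σ : ι → ι}

noncomputable def involutionForm (σ : ι → ι) : LinearMap.BilinForm ℝ g :=
  ∑ i, (LinearMap.mul ℝ ℝ).compl₁₂ (e.coord i) (e.coord (σ i))

lemma involutionForm_apply (x z : g) :
    involutionForm e σ x z = ∑ i, e.repr x i * e.repr z (σ i) := by
  simp [involutionForm, LinearMap.sum_apply]

lemma involutionForm_basis_left (i : ι) (z : g) : involutionForm e σ (e i) z = e.repr z (σ i) := by
  classical
  simp [involutionForm_apply, Finsupp.single_apply]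

lemma involutionForm_basis [DecidableEq ι] (i j : ι) :
    involutionForm e σ (e i) (e j) = if j = σ i then 1 else 0 := by
  rw [involutionForm_basis_left, e.repr_self, Finsupp.single_apply]

variable (hσ : Function.Involutive σ)
include hσ

lemma involutionForm_symm : IsSymm (involutionForm e σ) := fun x z => by
  simp only [involutionForm_apply]
  rw [← Equiv.sum_comp (hσ.toPerm σ)]
  simp only [Function.Involutive.coe_toPerm, hσ _, mul_comm]

lemma involutionForm_basis_right (x : g) (j : ι) :
    involutionForm e σ x (e j) = e.repr x (σ j) := by
  rw [involutionForm_symm e hσ, involutionForm_basis_left]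

lemma involutionForm_nondeg : Nondeg (involutionForm e σ) := fun x hx =>
  e.ext_elem fun i => by
    simpa [involutionForm_basis_right e hσ, hσ i] using hx (e (σ i))

noncomputable def raise (σ : ι → ι) (ω : LinearMap.BilinForm ℝ g) : g →ₗ[ℝ] g :=
  ∑ j, (ω.flip (e j)).smulRight (e (σ j))

variable (ω : LinearMap.BilinForm ℝ g)

lemma involutionForm_raise (x z : g) : involutionForm e σ (raise e σ ω x) z = ω x z := by
  simp only [raise, LinearMap.sum_apply, map_sum, LinearMap.smulRight_apply, map_smul,
    LinearMap.smul_apply, involutionForm_basis_left, hσ _, smul_eq_mul]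
  conv_rhs => rw [← e.sum_repr z]
  simp only [map_sum, map_smul, smul_eq_mul]
  exact Finset.sum_congr rfl fun j _ => mul_comm _ _

lemma repr_raise (x : g) (i : ι) : e.repr (raise e σ ω x) i = ω x (e (σ i)) := by
  rw [← involutionForm_raise e hσ, involutionForm_basis_right e hσ, hσ i]

lemma trace_raise_comp_raise [DecidableEq ι] :
    LinearMap.trace ℝ g (raise e σ ω ∘ₗ raise e σ ω)
      = ∑ i, ∑ j, ω (e i) (e (σ j)) * ω (e j) (e (σ i)) := by
  rw [LinearMap.trace_eq_matrix_trace ℝ e, Matrix.trace]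
  refine Finset.sum_congr rfl fun i _ => ?_
  conv_lhs => rw [Matrix.diag_apply, LinearMap.toMatrix_apply, LinearMap.comp_apply,
    repr_raise e hσ, ← e.sum_repr (raise e σ ω (e i))]
  simp [repr_raise e hσ]

end InvolutionForm

section LieCoord

variable (e : Module.Basis ι ℝ g) (c : ι)

noncomputable def lieCoord : LinearMap.BilinForm ℝ g :=
  (LieModule.toEnd ℝ g g : g →ₗ[ℝ] Module.End ℝ g).compr₂ (e.coord c)

@[simp]
lemma lieCoord_apply (x z : g) : lieCoord e c x z = e.repr ⁅x, z⁆ c := by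
  simp [lieCoord]

lemma lie_eq_lieCoord_smul [Fintype ι] (h : ∀ i j, ⁅e i, e j⁆ ∈ ℝ ∙ e c) (x z : g) :
    ⁅x, z⁆ = lieCoord e c x z • e c := by
  have hmem : ⁅x, z⁆ ∈ ℝ ∙ e c := by
    rw [← e.sum_repr x, ← e.sum_repr z]
    simp only [sum_lie, lie_sum, smul_lie, lie_smul]
    exact Submodule.sum_mem _ fun j _ => Submodule.smul_mem _ _ <|
      Submodule.sum_mem _ fun i _ => Submodule.smul_mem _ _ (h i j)
  obtain ⟨a, ha⟩ := Submodule.mem_span_singleton.mp hmem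
  simp [← ha]

end LieCoord

section HeisInvolution

def IsHeisPair (n i j : ℕ) : Prop :=
  ∃ m : Fin n, (i = 2 * (m : ℕ) + 1 ∧ j = 2 * (m : ℕ)) ∨ (i = 2 * (m : ℕ) ∧ j = 2 * (m : ℕ) + 1)

def heisPartner (n k : ℕ) : ℕ :=
  if k = 0 then 2 * n else if k = 2 * n then 0 else if k = 2 * n - 1 then k
  else if k % 2 = 1 then k + 1 else k - 1

def heisInvolution (n : ℕ) (i : Fin (2 * n + 1)) : Fin (2 * n + 1) :=
  ⟨heisPartner n i, by have := i.isLt; unfold heisPartner; split_ifs <;> omega⟩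

lemma heisInvolution_involutive (n : ℕ) : Function.Involutive (heisInvolution n) := fun i =>
  Fin.ext <| by
    have := i.isLt
    simp only [heisInvolution, heisPartner]
    split_ifs <;> first | contradiction | omega

lemma heisInvolution_breaks_pairs {n : ℕ} {i k : Fin (2 * n + 1)}
    (h : IsHeisPair n i (heisInvolution n k)) : ¬ IsHeisPair n k (heisInvolution n i) := by
  rintro ⟨m', hm'⟩
  obtain ⟨m, hm⟩ := h
  have := m.isLt
  have := m'.isLt
  have := i.isLt
  have := k.isLt
  simp only [heisInvolution, heisPartner] at hm hm'
  split_ifs at hm hm' <;> first | contradiction | omega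

end HeisInvolution

section HeisenbergAlgebra

variable {n : ℕ} {e : Module.Basis (Fin (2 * n + 1)) ℝ g}

lemma heisInvolution_last : heisInvolution n (Fin.last (2 * n)) = 0 :=
  Fin.ext <| by simp [heisInvolution, heisPartner]

lemma heisInvolution_penultimate :
    heisInvolution n ⟨2 * n - 1, by omega⟩ = ⟨2 * n - 1, by omega⟩ :=
  Fin.ext <| by simp only [heisInvolution, heisPartner]; split_ifs <;> omega

variable
    (hbr : ∀ i j : Fin (2 * n + 1), (i : ℕ) = j + 1 → Even (j : ℕ) →
      ⁅e i, e j⁆ = e (Fin.last (2 * n)))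
    (hzero : ∀ i j : Fin (2 * n + 1), ¬ IsHeisPair n i j → ⁅e i, e j⁆ = 0)

include hzero in
lemma lieCoord_eq_zero_of_not_isHeisPair (c : Fin (2 * n + 1)) {i j : Fin (2 * n + 1)}
    (h : ¬ IsHeisPair n i j) : lieCoord e c (e i) (e j) = 0 := by
  simp [hzero i j h]

include hbr hzero in
lemma lie_basis_mem_span_last (i j : Fin (2 * n + 1)) :
    ⁅e i, e j⁆ ∈ ℝ ∙ e (Fin.last (2 * n)) := by
  by_cases h : IsHeisPair n i j
  · obtain ⟨m, ⟨hi, hj⟩ | ⟨hi, hj⟩⟩ := h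
    · rw [hbr i j (by omega) ⟨m, by omega⟩]
      exact Submodule.mem_span_singleton_self _
    · rw [← lie_skew, hbr j i (by omega) ⟨m, by omega⟩]
      exact neg_mem (Submodule.mem_span_singleton_self _)
  · rw [hzero i j h]
    exact zero_mem _

include hzero in
lemma lie_last_eq_zero (z : g) : ⁅e (Fin.last (2 * n)), z⁆ = 0 := by
  rw [← e.sum_repr z]
  simp only [lie_sum, lie_smul]
  refine Finset.sum_eq_zero fun j _ => ?_
  rw [hzero _ j (by rintro ⟨m, h | h⟩ <;> · have := m.isLt; simp only [Fin.val_last] at h; omega),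
    smul_zero]

include hzero in
lemma trace_raise_lieCoord_comp_self (c : Fin (2 * n + 1)) :
    LinearMap.trace ℝ g
      (raise e (heisInvolution n) (lieCoord e c) ∘ₗ raise e (heisInvolution n) (lieCoord e c))
      = 0 := by
  rw [trace_raise_comp_raise e (heisInvolution_involutive n)]
  refine Finset.sum_eq_zero fun i _ => Finset.sum_eq_zero fun k _ => ?_
  by_cases h : IsHeisPair n i (heisInvolution n k)
  · rw [lieCoord_eq_zero_of_not_isHeisPair hzero c (heisInvolution_breaks_pairs h), mul_zero]
  · rw [lieCoord_eq_zero_of_not_isHeisPair hzero c h, zero_mul]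

include hbr hzero in
lemma raise_lieCoord_penultimate (hn : 1 ≤ n) :
    raise e (heisInvolution n) (lieCoord e (Fin.last (2 * n))) (e ⟨2 * n - 2, by omega⟩)
      = -e ⟨2 * n - 1, by omega⟩ := by
  have hσ := heisInvolution_involutive n
  have hpen : ⁅e ⟨2 * n - 2, by omega⟩, e ⟨2 * n - 1, by omega⟩⁆ = -e (Fin.last (2 * n)) := by
    rw [← lie_skew, hbr _ _ (by simp only; omega) ⟨n - 1, by simp only; omega⟩]
  refine e.ext_elem fun i => ?_
  rw [repr_raise e hσ, map_neg, Finsupp.neg_apply, e.repr_self]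
  by_cases hi : i = ⟨2 * n - 1, by omega⟩
  · subst hi
    simp [heisInvolution_penultimate, hpen]
  · have hpair : ¬ IsHeisPair n (2 * n - 2) (heisInvolution n i) := by
      rintro ⟨m, ⟨h, -⟩ | ⟨h, h'⟩⟩
      · omega
      · refine hi (hσ.injective ?_)
        rw [heisInvolution_penultimate]
        exact Fin.ext (by have := m.isLt; simp only at h h' ⊢; omega)
    rw [lieCoord_eq_zero_of_not_isHeisPair hzero _ hpair, Finsupp.single_eq_of_ne hi, neg_zero]

end HeisenbergAlgebra

/-- For `n ≥ 2`, the Heisenberg Lie algebra `h_{2n+1}` admits a Ricci-flat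
metric which is not flat. -/
theorem statement18 (n : ℕ) (hn : 2 ≤ n) {g : Type*} [LieRing g] [LieAlgebra ℝ g]
    (e : Module.Basis (Fin (2 * n + 1)) ℝ g)
    (hbr : ∀ i : Fin n,
      ⁅e ⟨2 * (i : ℕ) + 1, by have := i.isLt; omega⟩,
        e ⟨2 * (i : ℕ), by have := i.isLt; omega⟩⁆ =
      e ⟨2 * n, by omega⟩)
    (hzero : ∀ i j : Fin (2 * n + 1),
      (¬ ∃ m : Fin n, ((i : ℕ) = 2 * (m : ℕ) + 1 ∧ (j : ℕ) = 2 * (m : ℕ)) ∨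
        ((i : ℕ) = 2 * (m : ℕ) ∧ (j : ℕ) = 2 * (m : ℕ) + 1)) →
      ⁅e i, e j⁆ = 0) :
    ∃ B : LinearMap.BilinForm ℝ g, IsSymm B ∧ Nondeg B ∧ IsRicciFlat B ∧ ¬ IsFlat B := by
  have hbr' : ∀ i j : Fin (2 * n + 1), (i : ℕ) = j + 1 → Even (j : ℕ) →
      ⁅e i, e j⁆ = e (Fin.last (2 * n)) := by
    rintro i j hij ⟨k, hk⟩
    convert hbr ⟨k, by omega⟩ using 3 <;> simp only [Fin.ext_iff, Fin.val_last] <;> omega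
  have hσ := heisInvolution_involutive n
  set y := e (Fin.last (2 * n))
  set B := involutionForm e (heisInvolution n)
  set A := raise e (heisInvolution n) (lieCoord e (Fin.last (2 * n)))
  have hA : ∀ x z, ⁅x, z⁆ = B (A x) z • y := fun x z => by
    rw [involutionForm_raise e hσ]
    exact lie_eq_lieCoord_smul e _ (lie_basis_mem_span_last hbr' hzero) x z
  have hyy : B y y = 0 := by
    simp [B, y, involutionForm_basis, heisInvolution_last]
    omega
  have hsym := involutionForm_symm e hσ
  have hnd := involutionForm_nondeg e hσ
  refine ⟨B, hsym, hnd, fun m f v w => ?_, ?_⟩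
  · rw [ricci_eq_of_lie_eq f hsym hnd (e.ne_zero _) hA, trace_raise_lieCoord_comp_self hzero, hyy]
    ring
  · refine not_isFlat_of_lie_eq hsym hnd (e.ne_zero _) hA (lie_last_eq_zero hzero) hyy
      (b := e ⟨2 * n - 2, by omega⟩) ?_ ?_
    · simp [B, involutionForm_basis, heisInvolution_last]
      omega
    · simp [A, B, raise_lieCoord_penultimate hbr' hzero (by omega : 1 ≤ n), involutionForm_basis,
        heisInvolution_penultimate]

end ArrowBreakingPaper
end
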